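/- Let K be a field and let P be a polyomino that contains a zig-zag walk. Then the polyomino ideal I_P is not a prime ideal of S_P. -/

import Mathlib

/-!
Put `f = ∏ x_{v_i}`. Each interval `I_i` gives `x_{v_i} x_{z_i} ≡ x_{u_i} x_{v_{i+1}}` modulo
`I_P`, and multiplying these congruences around the closed walk gives `f · f_W ∈ I_P`.
Evaluating every variable at `1` kills `I_P`, so the monomial `f` is not in `I_P`. Nor is
`f_W`: no inner interval contains two of the `z_i`, so neither monomial of an inner 2-minor
divides `∏ x_{z_i}`, hence the coefficient of `∏ x_{z_i}` vanishes on `I_P`; but it is `1` in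
`f_W`, since no `u_i` equals a `z_j`.
-/

open MvPolynomial

namespace PolyoStmt

/-- A cell of `ℤ²`, identified with its lower-left corner. -/
abbrev Cell : Type := ℤ × ℤ

/-- The four vertices of a cell. -/
def cellVertices (c : Cell) : Set (ℤ × ℤ) :=
  {c, (c.1 + 1, c.2), (c.1, c.2 + 1), (c.1 + 1, c.2 + 1)}

/-- The vertex set of a collection of cells. -/
def vertexSet (P : Finset Cell) : Set (ℤ × ℤ) := ⋃ c ∈ P, cellVertices c

/-- Two cells share a common edge. -/
def SharesEdge (a b : Cell) : Prop :=
  (a.1 = b.1 ∧ (b.2 = a.2 + 1 ∨ a.2 = b.2 + 1)) ∨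
  (a.2 = b.2 ∧ (b.1 = a.1 + 1 ∨ a.1 = b.1 + 1))

/-- Two cells share at least one vertex (equivalently, the closed unit squares meet). -/
def SharesVertex (a b : Cell) : Prop := (cellVertices a ∩ cellVertices b).Nonempty

/-- Any two members of `S` are joined by a path inside `S` whose consecutive
members are related by `r`. -/
def ConnectedVia (S : Set Cell) (r : Cell → Cell → Prop) : Prop :=
  ∀ a ∈ S, ∀ b ∈ S,
    Relation.ReflTransGen (fun x y => x ∈ S ∧ y ∈ S ∧ r x y) a b

/-- A polyomino: a nonempty, edge-connected finite collection of cells. -/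
def IsPolyomino (P : Finset Cell) : Prop :=
  P.Nonempty ∧ ConnectedVia (↑P) SharesEdge

/-- A collection of cells is simple if its complement is edge-connected (no holes). -/
def IsSimple (P : Finset Cell) : Prop :=
  ConnectedVia ((↑P : Set Cell)ᶜ) SharesEdge

/-- A collection of cells is weakly connected if it is connected through shared vertices. -/
def IsWeaklyConnected (P : Finset Cell) : Prop :=
  ConnectedVia (↑P) SharesVertex

def IsRowConvex (P : Finset Cell) : Prop :=
  ∀ c ∈ P, ∀ d ∈ P, c.2 = d.2 → ∀ x : ℤ, c.1 ≤ x → x ≤ d.1 → (x, c.2) ∈ P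

def IsColumnConvex (P : Finset Cell) : Prop :=
  ∀ c ∈ P, ∀ d ∈ P, c.1 = d.1 → ∀ y : ℤ, c.2 ≤ y → y ≤ d.2 → (c.1, y) ∈ P

def IsConvex (P : Finset Cell) : Prop := IsRowConvex P ∧ IsColumnConvex P

/-- `P` is thin: it contains no square tetromino. -/
def IsThin (P : Finset Cell) : Prop :=
  ¬ ∃ c : Cell, c ∈ P ∧ (c.1 + 1, c.2) ∈ P ∧ (c.1, c.2 + 1) ∈ P ∧ (c.1 + 1, c.2 + 1) ∈ P

/-- The cell with lower-left corner `c` is contained in the interval `[a, b]`. -/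
def CellInBox (a b c : Cell) : Prop := a ≤ c ∧ c.1 + 1 ≤ b.1 ∧ c.2 + 1 ≤ b.2

/-- `[a, b]` is an inner interval of `P`: it is proper and all cells inside it belong to `P`. -/
def IsInnerInterval (P : Finset Cell) (a b : Cell) : Prop :=
  a.1 < b.1 ∧ a.2 < b.2 ∧ ∀ c : Cell, CellInBox a b c → c ∈ P

/-- The cells of the rectangle determined by the interval `[a, b]`. -/
noncomputable def rectCells (a b : Cell) : Finset Cell :=
  (Finset.Icc a b).filter fun c => c.1 + 1 ≤ b.1 ∧ c.2 + 1 ≤ b.2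

/-- The type indexing the variables of `S_P`: the vertices of `P`. -/
abbrev Vtx (P : Finset Cell) : Type := {v : ℤ × ℤ // v ∈ vertexSet P}

/-- The polynomial ring `S_P = K[x_v : v ∈ V(P)]`. -/
abbrev polyRing (K : Type) [Field K] (P : Finset Cell) : Type :=
  MvPolynomial (Vtx P) K

/-- The polyomino ideal (ideal of inner 2-minors) of `P`. -/
noncomputable def polyoIdeal (K : Type) [Field K] (P : Finset Cell) :
    Ideal (polyRing K P) :=
  Ideal.span { f | ∃ (a b : ℤ × ℤ) (ha : a ∈ vertexSet P) (hb : b ∈ vertexSet P)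
      (hc : ((a.1, b.2) : ℤ × ℤ) ∈ vertexSet P)
      (hd : ((b.1, a.2) : ℤ × ℤ) ∈ vertexSet P),
      IsInnerInterval P a b ∧
      f = X ⟨a, ha⟩ * X ⟨b, hb⟩ - X ⟨(a.1, b.2), hc⟩ * X ⟨(b.1, a.2), hd⟩ }

/-- The coordinate ring `K[P] = S_P / I_P`. -/
abbrev coordRing (K : Type) [Field K] (P : Finset Cell) : Type :=
  polyRing K P ⧸ polyoIdeal K P

/-- The degree-`k` graded component of `K[P]` (the image of the homogeneous
polynomials of degree `k`). -/
noncomputable def gradedPiece (K : Type) [Field K] (P : Finset Cell) (k : ℕ) :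
    Submodule K (coordRing K P) :=
  (MvPolynomial.homogeneousSubmodule (Vtx P) K k).map
    (Ideal.Quotient.mkₐ K (polyoIdeal K P)).toLinearMap

/-- The Hilbert–Poincaré series of `K[P]`, as a formal power series over `ℤ`. -/
noncomputable def hilbertSeries (K : Type) [Field K] (P : Finset Cell) : PowerSeries ℤ :=
  PowerSeries.mk fun k => (Module.finrank K (gradedPiece K P k) : ℤ)

/-- Cells `A` and `B` of `P` are attacking. -/
def Attacking (P : Finset Cell) (A B : Cell) : Prop :=
  A ≠ B ∧
  ((A.2 = B.2 ∧ ∀ x : ℤ, min A.1 B.1 ≤ x → x ≤ max A.1 B.1 → (x, A.2) ∈ P) ∨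
   (A.1 = B.1 ∧ ∀ y : ℤ, min A.2 B.2 ≤ y → y ≤ max A.2 B.2 → (A.1, y) ∈ P))

/-- The set of `k`-rook configurations of `P`. -/
def RookConfigs (P : Finset Cell) (k : ℕ) : Set (Finset Cell) :=
  {F | ↑F ⊆ (↑P : Set Cell) ∧ F.card = k ∧
    (↑F : Set Cell).Pairwise fun A B => ¬ Attacking P A B}

/-- The number of `k`-rook configurations of `P`. -/
noncomputable def rookNum (P : Finset Cell) (k : ℕ) : ℕ := Set.ncard (RookConfigs P k)

/-- The rook polynomial of `P`, regarded as a formal power series over `ℤ`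
(all coefficients beyond the rook number vanish). -/
noncomputable def rookSeries (P : Finset Cell) : PowerSeries ℤ :=
  PowerSeries.mk fun k => (rookNum P k : ℤ)

/-- One switch move between rook configurations of `P`. -/
def SwitchStep (P : Finset Cell) (F F' : Finset Cell) : Prop :=
  ∃ a b : Cell, IsInnerInterval P a b ∧
    ((a ∈ F ∧ (b.1 - 1, b.2 - 1) ∈ F ∧
        F' = (F \ {a, (b.1 - 1, b.2 - 1)}) ∪ {(a.1, b.2 - 1), (b.1 - 1, a.2)}) ∨
     ((a.1, b.2 - 1) ∈ F ∧ (b.1 - 1, a.2) ∈ F ∧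
        F' = (F \ {(a.1, b.2 - 1), (b.1 - 1, a.2)}) ∪ {a, (b.1 - 1, b.2 - 1)}))

/-- Equivalence of `k`-rook configurations up to switches. -/
def switchSetoid (P : Finset Cell) (k : ℕ) : Setoid (RookConfigs P k) :=
  ⟨fun F F' => Relation.EqvGen (SwitchStep P) F.1 F'.1,
   fun _ => Relation.EqvGen.refl _,
   fun h => Relation.EqvGen.symm _ _ h,
   fun h h' => Relation.EqvGen.trans _ _ _ h h'⟩

/-- The number of equivalence classes of `k`-rook configurations up to switches. -/
noncomputable def switchRookNum (P : Finset Cell) (k : ℕ) : ℕ :=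
  Nat.card (Quotient (switchSetoid P k))

/-- The switching rook polynomial of `P`, regarded as a formal power series over `ℤ`. -/
noncomputable def switchRookSeries (P : Finset Cell) : PowerSeries ℤ :=
  PowerSeries.mk fun k => (switchRookNum P k : ℤ)

/-- The unit horizontal segment from `(x, y)` to `(x + 1, y)` is an edge of a cell of `P`. -/
def HorizEdge (P : Finset Cell) (x y : ℤ) : Prop := (x, y) ∈ P ∨ (x, y - 1) ∈ P

/-- The unit vertical segment from `(x, y)` to `(x, y + 1)` is an edge of a cell of `P`. -/
def VertEdge (P : Finset Cell) (x y : ℤ) : Prop := (x, y) ∈ P ∨ (x - 1, y) ∈ P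

/-- `p` and `q` lie on a common horizontal or vertical edge interval of `P`. -/
def OnCommonEdgeInterval (P : Finset Cell) (p q : ℤ × ℤ) : Prop :=
  (p.2 = q.2 ∧ ∀ x : ℤ, min p.1 q.1 ≤ x → x < max p.1 q.1 → HorizEdge P x p.2) ∨
  (p.1 = q.1 ∧ ∀ y : ℤ, min p.2 q.2 ≤ y → y < max p.2 q.2 → VertEdge P p.1 y)

/-- A zig-zag walk of `P`, consisting of `n + 2` distinct inner intervals
`I_i = [lo i, hi i]` with distinguished corners `v i`, `z i`, `u i`. -/
structure ZigZagWalk (P : Finset Cell) where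
  n : ℕ
  lo : ZMod (n + 2) → ℤ × ℤ
  hi : ZMod (n + 2) → ℤ × ℤ
  v : ZMod (n + 2) → ℤ × ℤ
  z : ZMod (n + 2) → ℤ × ℤ
  u : ZMod (n + 2) → ℤ × ℤ
  inner : ∀ i, IsInnerInterval P (lo i) (hi i)
  distinct : ∀ i j, lo i = lo j → hi i = hi j → i = j
  corners : ∀ i,
    (({v i, z i} : Set (ℤ × ℤ)) = {lo i, hi i} ∧
      ({u i, v (i + 1)} : Set (ℤ × ℤ)) = {((lo i).1, (hi i).2), ((hi i).1, (lo i).2)}) ∨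
    (({v i, z i} : Set (ℤ × ℤ)) = {((lo i).1, (hi i).2), ((hi i).1, (lo i).2)} ∧
      ({u i, v (i + 1)} : Set (ℤ × ℤ)) = {lo i, hi i})
  inter : ∀ i,
    Set.Icc (lo i) (hi i) ∩ Set.Icc (lo (i + 1)) (hi (i + 1)) = {v (i + 1)}
  edgeInt : ∀ i, OnCommonEdgeInterval P (v i) (v (i + 1))
  noCommon : ∀ i j, i ≠ j → ∀ a b : ℤ × ℤ, IsInnerInterval P a b →
    ¬ (z i ∈ Set.Icc a b ∧ z j ∈ Set.Icc a b)
  hv : ∀ i, v i ∈ vertexSet P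
  hz : ∀ i, z i ∈ vertexSet P
  hu : ∀ i, u i ∈ vertexSet P

/-- `P` admits a zig-zag walk. -/
def HasZigZagWalk (P : Finset Cell) : Prop := Nonempty (ZigZagWalk P)

/-- The binomial `f_W` attached to a zig-zag walk `W`. -/
noncomputable def zigZagBinomial (K : Type) [Field K] {P : Finset Cell}
    (W : ZigZagWalk P) : polyRing K P :=
  (∏ i : ZMod (W.n + 2), X ⟨W.z i, W.hz i⟩) - ∏ i : ZMod (W.n + 2), X ⟨W.u i, W.hu i⟩

/-- A closed path polyomino. -/
def IsClosedPath (P : Finset Cell) : Prop :=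
  IsPolyomino P ∧
  ∃ (n : ℕ) (A : ZMod (n + 6) → Cell),
    Function.Injective A ∧
    (∀ i, A i ∈ P) ∧ (∀ c ∈ P, ∃ i, A i = c) ∧
    (∀ i, SharesEdge (A i) (A (i + 1))) ∧
    (∀ i j : ZMod (n + 6),
      j ∉ ({i - 2, i - 1, i, i + 1, i + 2} : Set (ZMod (n + 6))) →
      ¬ SharesVertex (A i) (A j))

/-- A grid polyomino. -/
def IsGridPolyomino (P : Finset Cell) : Prop :=
  IsPolyomino P ∧
  ∃ (m n : ℤ) (r s : ℕ) (hr : 0 < r) (hs : 0 < s)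
    (x x' : Fin r → ℤ) (y y' : Fin s → ℤ),
    (∀ i, x i < x' i) ∧ (∀ j, y j < y' j) ∧
    1 < x ⟨0, hr⟩ ∧ x' ⟨r - 1, Nat.sub_lt hr one_pos⟩ < m ∧
    1 < y ⟨0, hs⟩ ∧ y' ⟨s - 1, Nat.sub_lt hs one_pos⟩ < n ∧
    (∀ i : Fin r, ∀ h : i.1 + 1 < r, x ⟨i.1 + 1, h⟩ = x' i + 1) ∧
    (∀ j : Fin s, ∀ h : j.1 + 1 < s, y ⟨j.1 + 1, h⟩ = y' j + 1) ∧
    P = rectCells (1, 1) (m, n) \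
      Finset.univ.biUnion (fun i : Fin r =>
        Finset.univ.biUnion fun j : Fin s => rectCells (x i, y j) (x' i, y' j))

/-- A maximal horizontal edge interval of `P`. -/
structure MaxHorizInterval (P : Finset Cell) where
  row : ℤ
  left : ℤ
  right : ℤ
  le : left ≤ right
  edges : ∀ x : ℤ, left ≤ x → x < right → HorizEdge P x row
  notLeft : ¬ HorizEdge P (left - 1) row
  notRight : ¬ HorizEdge P right row

/-- Membership of a lattice point in a maximal horizontal edge interval. -/
def MaxHorizInterval.mem {P : Finset Cell} (H : MaxHorizInterval P) (p : ℤ × ℤ) : Prop :=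
  p.2 = H.row ∧ H.left ≤ p.1 ∧ p.1 ≤ H.right

/-- A maximal vertical edge interval of `P`. -/
structure MaxVertInterval (P : Finset Cell) where
  col : ℤ
  bot : ℤ
  top : ℤ
  le : bot ≤ top
  edges : ∀ y : ℤ, bot ≤ y → y < top → VertEdge P col y
  notBot : ¬ VertEdge P col (bot - 1)
  notTop : ¬ VertEdge P col top

/-- Membership of a lattice point in a maximal vertical edge interval. -/
def MaxVertInterval.mem {P : Finset Cell} (V : MaxVertInterval P) (p : ℤ × ℤ) : Prop :=
  p.1 = V.col ∧ V.bot ≤ p.2 ∧ p.2 ≤ V.top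

/-- The homomorphism `Φ_P : S_P → K[v₁, …, v_m, h₁, …, h_n]` sending `x_a` to
`v_i h_j`, where `V_i` (given by `Vmap`) and `H_j` (given by `Hmap`) are the maximal
vertical and horizontal edge intervals through `a`. -/
noncomputable def PhiMap (K : Type) [Field K] (P : Finset Cell)
    (Vmap : Vtx P → MaxVertInterval P) (Hmap : Vtx P → MaxHorizInterval P) :
    polyRing K P →ₐ[K] MvPolynomial (MaxVertInterval P ⊕ MaxHorizInterval P) K :=
  aeval fun a => X (Sum.inl (Vmap a)) * X (Sum.inr (Hmap a))

/-- The monomial `y_u y_w` attached to an edge `{u, w}` of a graph. -/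
noncomputable def edgeMonomial (K : Type) [Field K] {VG : Type} (e : Sym2 VG) :
    MvPolynomial VG K :=
  Sym2.lift ⟨fun u w => X u * X w, fun u w => mul_comm _ _⟩ e

/-- A parallelogram polyomino. -/
def IsParallelogram (P : Finset Cell) : Prop :=
  IsPolyomino P ∧ IsConvex P ∧
  ∃ a b : Cell, (∀ c ∈ P, a ≤ c ∧ c ≤ b) ∧ a ∈ P ∧ b ∈ P

/-- A frame polyomino: the complement of a parallelogram polyomino inside a rectangle,
the parallelogram sharing no vertex with the boundary of the rectangle. -/
def IsFrame (P : Finset Cell) : Prop :=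
  IsPolyomino P ∧
  ∃ (a b : Cell) (Q : Finset Cell), a.1 < b.1 ∧ a.2 < b.2 ∧
    IsParallelogram Q ∧ Q ⊆ rectCells a b ∧
    (∀ c ∈ Q, a.1 < c.1 ∧ c.1 + 1 < b.1 ∧ a.2 < c.2 ∧ c.2 + 1 < b.2) ∧
    P = rectCells a b \ Q

section MonomialCoefficients

open Finsupp

variable {σ R : Type*} [CommSemiring R]

theorem coeff_mul_X_mul_X_eq_zero {μ : σ →₀ ℕ} {p q : σ} (h : p ∉ μ.support ∨ q ∉ μ.support)
    (r : MvPolynomial σ R) : coeff μ (r * (X p * X q)) = 0 := by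
  classical
  rcases h with h | h
  · rw [mul_comm (X p), ← mul_assoc, coeff_mul_X', if_neg h]
  · rw [← mul_assoc, coeff_mul_X', if_neg h]

theorem coeff_eq_zero_of_mem_span {S : Set (MvPolynomial σ R)} {μ : σ →₀ ℕ}
    (hS : ∀ s ∈ S, ∀ r, coeff μ (r * s) = 0) {f : MvPolynomial σ R} (hf : f ∈ Ideal.span S) :
    coeff μ f = 0 := by
  suffices h : ∀ r, coeff μ (r * f) = 0 by simpa using h 1
  induction hf using Submodule.span_induction with
  | mem s hs => exact hS s hs
  | zero => simp
  | add x y _ _ hx hy => intro r; rw [mul_add, coeff_add, hx, hy, add_zero]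
  | smul a x _ hx => intro r; rw [smul_eq_mul, ← mul_assoc]; exact hx _

theorem prod_X_eq_monomial {ι : Type*} (s : Finset ι) (t : ι → σ) :
    ∏ i ∈ s, (X (t i) : MvPolynomial σ R) = monomial (∑ i ∈ s, single (t i) 1) 1 :=
  (monomial_sum_one s _).symm

theorem exists_eq_of_mem_support_sum_single {ι : Type*} {s : Finset ι} {t : ι → σ} {p : σ}
    (hp : p ∈ (∑ i ∈ s, single (t i) 1 : σ →₀ ℕ).support) : ∃ i ∈ s, t i = p := by
  obtain ⟨i, hi, hpi⟩ := mem_support_finsetSum p hp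
  exact ⟨i, hi, (Finset.mem_singleton.mp (support_single_subset hpi)).symm⟩

theorem mem_support_sum_single {ι : Type*} {s : Finset ι} (t : ι → σ) {j : ι} (hj : j ∈ s) :
    t j ∈ (∑ i ∈ s, single (t i) 1 : σ →₀ ℕ).support := by
  rw [Finsupp.mem_support_iff, finsetSum_apply]
  refine Nat.pos_iff_ne_zero.mp (lt_of_lt_of_le ?_
    (Finset.single_le_sum (fun _ _ => Nat.zero_le _) hj))
  simp

end MonomialCoefficients

theorem prod_sub_prod_mem {R ι : Type*} [CommRing R] {I : Ideal R} (s : Finset ι) {f g : ι → R}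
    (h : ∀ i ∈ s, f i - g i ∈ I) : ∏ i ∈ s, f i - ∏ i ∈ s, g i ∈ I := by
  rw [← Ideal.Quotient.eq, map_prod, map_prod]
  exact Finset.prod_congr rfl fun i hi => Ideal.Quotient.eq.mpr (h i hi)

def diagCorners (a b : ℤ × ℤ) : Set (ℤ × ℤ) := {a, b}

def antidiagCorners (a b : ℤ × ℤ) : Set (ℤ × ℤ) := {(a.1, b.2), (b.1, a.2)}

theorem mem_Icc_of_mem_corners {a b p : ℤ × ℤ} (hab : a ≤ b)
    (hp : p ∈ diagCorners a b ∪ antidiagCorners a b) : p ∈ Set.Icc a b := by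
  obtain ⟨h1, h2⟩ := hab
  simp only [diagCorners, antidiagCorners, Set.mem_union, Set.mem_insert_iff,
    Set.mem_singleton_iff] at hp
  rcases hp with (rfl | rfl) | (rfl | rfl) <;>
    exact ⟨⟨by omega, by omega⟩, by omega, by omega⟩

theorem disjoint_diagCorners_antidiagCorners {a b : ℤ × ℤ} (h1 : a.1 < b.1) (h2 : a.2 < b.2) :
    Disjoint (diagCorners a b) (antidiagCorners a b) := by
  refine Set.disjoint_left.mpr ?_
  intro p hd ha
  simp only [diagCorners, antidiagCorners, Set.mem_insert_iff, Set.mem_singleton_iff] at hd ha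
  rcases hd with rfl | rfl <;> rcases ha with h | h <;> simp only [Prod.ext_iff] at h <;> omega

variable {P : Finset Cell}

theorem IsInnerInterval.le {a b : ℤ × ℤ} (h : IsInnerInterval P a b) : a ≤ b :=
  ⟨h.1.le, h.2.1.le⟩

theorem IsInnerInterval.Icc_subset_vertexSet {a b : ℤ × ℤ} (h : IsInnerInterval P a b) :
    Set.Icc a b ⊆ vertexSet P := by
  obtain ⟨hab1, hab2, hcells⟩ := h
  rintro p ⟨⟨hap1, hap2⟩, hpb1, hpb2⟩
  have hc : ((min p.1 (b.1 - 1), min p.2 (b.2 - 1)) : Cell) ∈ P :=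
    hcells _ ⟨⟨by omega, by omega⟩, by omega, by omega⟩
  refine Set.mem_biUnion hc ?_
  simp only [cellVertices, Set.mem_insert_iff, Set.mem_singleton_iff, Prod.ext_iff]
  omega

theorem polyoIdeal_le_ker_aeval_one (K : Type) [Field K] :
    polyoIdeal K P ≤ RingHom.ker (aeval fun _ => (1 : K) : polyRing K P →ₐ[K] K) := by
  refine Ideal.span_le.mpr ?_
  rintro _ ⟨a, b, ha, hb, hc, hd, -, rfl⟩
  simp [RingHom.mem_ker]

theorem prod_X_notMem_polyoIdeal (K : Type) [Field K] {ι : Type*} (s : Finset ι)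
    (t : ι → Vtx P) : ∏ i ∈ s, X (t i) ∉ polyoIdeal K P := by
  intro h
  simpa [RingHom.mem_ker] using polyoIdeal_le_ker_aeval_one K h

theorem X_mul_X_eq_of_pair_eq {R : Type*} [CommSemiring R] {p q a b : Vtx P}
    (h : ({p.1, q.1} : Set (ℤ × ℤ)) = {a.1, b.1}) :
    (X p * X q : MvPolynomial (Vtx P) R) = X a * X b := by
  rcases Set.pair_eq_pair_iff.mp h with ⟨hpa, hqb⟩ | ⟨hpb, hqa⟩
  · rw [Subtype.ext hpa, Subtype.ext hqb]
  · rw [Subtype.ext hpb, Subtype.ext hqa, mul_comm]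

theorem X_mul_X_sub_X_mul_X_mem_polyoIdeal (K : Type) [Field K] {a b : ℤ × ℤ}
    (hI : IsInnerInterval P a b) {p q r s : Vtx P}
    (hpq : ({p.1, q.1} : Set (ℤ × ℤ)) = diagCorners a b)
    (hrs : ({r.1, s.1} : Set (ℤ × ℤ)) = antidiagCorners a b) :
    X p * X q - X r * X s ∈ polyoIdeal K P := by
  have hV : ∀ x ∈ diagCorners a b ∪ antidiagCorners a b, x ∈ vertexSet P := fun x hx =>
    hI.Icc_subset_vertexSet (mem_Icc_of_mem_corners hI.le hx)
  have ha := hV a (by simp [diagCorners])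
  have hb := hV b (by simp [diagCorners])
  have hc := hV (a.1, b.2) (by simp [antidiagCorners])
  have hd := hV (b.1, a.2) (by simp [antidiagCorners])
  rw [X_mul_X_eq_of_pair_eq (a := ⟨a, ha⟩) (b := ⟨b, hb⟩) hpq,
    X_mul_X_eq_of_pair_eq (a := ⟨_, hc⟩) (b := ⟨_, hd⟩) hrs]
  exact Ideal.subset_span ⟨a, b, ha, hb, hc, hd, hI, rfl⟩

namespace ZigZagWalk

variable (W : ZigZagWalk P)

theorem z_mem_and_u_mem_corners (i : ZMod (W.n + 2)) :
    (W.z i ∈ diagCorners (W.lo i) (W.hi i) ∧ W.u i ∈ antidiagCorners (W.lo i) (W.hi i)) ∨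
      (W.z i ∈ antidiagCorners (W.lo i) (W.hi i) ∧ W.u i ∈ diagCorners (W.lo i) (W.hi i)) := by
  rcases W.corners i with ⟨hz, hu⟩ | ⟨hz, hu⟩
  · exact Or.inl ⟨by rw [diagCorners, ← hz]; simp, by rw [antidiagCorners, ← hu]; simp⟩
  · exact Or.inr ⟨by rw [antidiagCorners, ← hz]; simp, by rw [diagCorners, ← hu]; simp⟩

theorem z_mem_Icc (i : ZMod (W.n + 2)) : W.z i ∈ Set.Icc (W.lo i) (W.hi i) := by
  refine mem_Icc_of_mem_corners (W.inner i).le ?_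
  rcases W.z_mem_and_u_mem_corners i with ⟨h, -⟩ | ⟨h, -⟩
  exacts [Or.inl h, Or.inr h]

theorem u_mem_Icc (i : ZMod (W.n + 2)) : W.u i ∈ Set.Icc (W.lo i) (W.hi i) := by
  refine mem_Icc_of_mem_corners (W.inner i).le ?_
  rcases W.z_mem_and_u_mem_corners i with ⟨-, h⟩ | ⟨-, h⟩
  exacts [Or.inr h, Or.inl h]

theorem eq_of_z_mem_Icc {a b : ℤ × ℤ} (hI : IsInnerInterval P a b) {i j : ZMod (W.n + 2)}
    (hi : W.z i ∈ Set.Icc a b) (hj : W.z j ∈ Set.Icc a b) : i = j := by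
  by_contra hij
  exact W.noCommon i j hij a b hI ⟨hi, hj⟩

theorem u_ne_z (i j : ZMod (W.n + 2)) : W.u i ≠ W.z j := by
  intro h
  obtain rfl := W.eq_of_z_mem_Icc (W.inner i) (W.z_mem_Icc i) (h ▸ W.u_mem_Icc i)
  have hdisj := disjoint_diagCorners_antidiagCorners (W.inner i).1 (W.inner i).2.1
  rcases W.z_mem_and_u_mem_corners i with ⟨hz, hu⟩ | ⟨hz, hu⟩
  · exact Set.disjoint_left.mp hdisj hz (h ▸ hu)
  · exact Set.disjoint_left.mp hdisj (h ▸ hu) hz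

theorem step_mem (K : Type) [Field K] (i : ZMod (W.n + 2)) :
    (X ⟨W.v i, W.hv i⟩ * X ⟨W.z i, W.hz i⟩ : polyRing K P)
      - X ⟨W.u i, W.hu i⟩ * X ⟨W.v (i + 1), W.hv (i + 1)⟩ ∈ polyoIdeal K P := by
  rcases W.corners i with ⟨h1, h2⟩ | ⟨h1, h2⟩
  · exact X_mul_X_sub_X_mul_X_mem_polyoIdeal K (W.inner i) h1 h2
  · rw [← neg_sub]
    exact neg_mem (X_mul_X_sub_X_mul_X_mem_polyoIdeal K (W.inner i) h2 h1)

theorem prod_v_mul_zigZagBinomial_mem (K : Type) [Field K] :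
    (∏ i, X ⟨W.v i, W.hv i⟩) * zigZagBinomial K W ∈ polyoIdeal K P := by
  have hshift : ∏ i, (X ⟨W.v i, W.hv i⟩ : polyRing K P) = ∏ i, X ⟨W.v (i + 1), W.hv (i + 1)⟩ :=
    (Fintype.prod_equiv (Equiv.addRight 1) _ _ fun _ => rfl).symm
  have hzs : (∏ i, X ⟨W.v i, W.hv i⟩) * ∏ i, (X ⟨W.z i, W.hz i⟩ : polyRing K P) =
      ∏ i, X ⟨W.v i, W.hv i⟩ * X ⟨W.z i, W.hz i⟩ :=
    Finset.prod_mul_distrib.symm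
  have hus : (∏ i, X ⟨W.v i, W.hv i⟩) * ∏ i, (X ⟨W.u i, W.hu i⟩ : polyRing K P) =
      ∏ i, X ⟨W.u i, W.hu i⟩ * X ⟨W.v (i + 1), W.hv (i + 1)⟩ := by
    rw [hshift, mul_comm, Finset.prod_mul_distrib]
  rw [zigZagBinomial, mul_sub, hzs, hus]
  exact prod_sub_prod_mem _ fun i _ => W.step_mem K i

noncomputable def zExponent : Vtx P →₀ ℕ := ∑ i, Finsupp.single ⟨W.z i, W.hz i⟩ 1

theorem notMem_support_zExponent_or {a b : ℤ × ℤ} (hI : IsInnerInterval P a b) {p q : Vtx P}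
    (hp : p.1 ∈ Set.Icc a b) (hq : q.1 ∈ Set.Icc a b) (hpq : p ≠ q) :
    p ∉ W.zExponent.support ∨ q ∉ W.zExponent.support := by
  by_contra! h
  obtain ⟨i, -, rfl⟩ := exists_eq_of_mem_support_sum_single h.1
  obtain ⟨j, -, rfl⟩ := exists_eq_of_mem_support_sum_single h.2
  obtain rfl := W.eq_of_z_mem_Icc hI hp hq
  exact hpq rfl

theorem coeff_zExponent_eq_zero_of_mem (K : Type) [Field K] {f : polyRing K P}
    (hf : f ∈ polyoIdeal K P) : coeff W.zExponent f = 0 := by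
  refine coeff_eq_zero_of_mem_span ?_ hf
  rintro _ ⟨a, b, ha, hb, hc, hd, hI, rfl⟩ r
  have hab : a ≠ b := fun h => hI.1.ne (Prod.ext_iff.mp h).1
  have hcd : ((a.1, b.2) : ℤ × ℤ) ≠ (b.1, a.2) := fun h => hI.1.ne (Prod.ext_iff.mp h).1
  rw [mul_sub, coeff_sub,
    coeff_mul_X_mul_X_eq_zero (W.notMem_support_zExponent_or hI
      (mem_Icc_of_mem_corners hI.le (by simp [diagCorners]))
      (mem_Icc_of_mem_corners hI.le (by simp [diagCorners])) (Subtype.coe_ne_coe.mp hab)),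
    coeff_mul_X_mul_X_eq_zero (W.notMem_support_zExponent_or hI
      (mem_Icc_of_mem_corners hI.le (by simp [antidiagCorners]))
      (mem_Icc_of_mem_corners hI.le (by simp [antidiagCorners])) (Subtype.coe_ne_coe.mp hcd)),
    sub_zero]

theorem zigZagBinomial_notMem (K : Type) [Field K] : zigZagBinomial K W ∉ polyoIdeal K P := by
  intro h
  have hne : ∑ i, Finsupp.single (⟨W.u i, W.hu i⟩ : Vtx P) 1 ≠ W.zExponent := by
    intro heq
    have hz0 := mem_support_sum_single (fun i => (⟨W.z i, W.hz i⟩ : Vtx P)) (Finset.mem_univ 0)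
    rw [← zExponent, ← heq] at hz0
    obtain ⟨i, -, hi⟩ := exists_eq_of_mem_support_sum_single hz0
    exact W.u_ne_z i 0 (congrArg Subtype.val hi)
  have hcoeff := W.coeff_zExponent_eq_zero_of_mem K h
  rw [zigZagBinomial, prod_X_eq_monomial, prod_X_eq_monomial, ← zExponent, coeff_sub,
    coeff_monomial, coeff_monomial, if_pos rfl, if_neg hne, sub_zero] at hcoeff
  exact one_ne_zero hcoeff

end ZigZagWalk

theorem stmt8_general (K : Type) [Field K] (P : Finset Cell)
    (hw : HasZigZagWalk P) :
    ¬ (polyoIdeal K P).IsPrime := by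
  obtain ⟨W⟩ := hw
  intro hprime
  rcases hprime.mem_or_mem (W.prod_v_mul_zigZagBinomial_mem K) with h | h
  · exact prod_X_notMem_polyoIdeal K _ _ h
  · exact W.zigZagBinomial_notMem K h

theorem stmt8 (K : Type) [Field K] (P : Finset Cell) (hP : IsPolyomino P)
    (hw : HasZigZagWalk P) :
    ¬ (polyoIdeal K P).IsPrime :=
  stmt8_general K P hw

end PolyoStmt
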